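/- Every unannotated cut-free derivation in the nested sequent calculus for GL can be lifted to an annotated derivation: if a nested sequent Γ is cut-free derivable in the plain calculus, then there is an annotation of Γ (assigning a formula to each bracket and a finite set of formulas to each diamond formula) such that the annotated sequent is derivable in the annotated calculus, and erasing all annotations from the annotated derivation recovers a derivation of Γ. -/
import Mathlib


/-- Formulas of GL in negation normal form. -/
inductive Formula : Type where
  | pos : ℕ → Formula
  | neg : ℕ → Formula
  | and : Formula → Formula → Formula
  | or  : Formula → Formula → Formula
  | box : Formula → Formula
  | dia : Formula → Formula
deriving DecidableEq

/-- Negation `A⊥` of a formula, via De Morgan duality. -/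
def Formula.negate : Formula → Formula
  | .pos a => .neg a
  | .neg a => .pos a
  | .and A B => .or A.negate B.negate
  | .or A B => .and A.negate B.negate
  | .box A => .dia A.negate
  | .dia A => .box A.negate

/-- An element of a nested sequent: a formula or a nested (bracketed) sequent. -/
inductive SeqElem : Type where
  | fml : Formula → SeqElem
  | nest : List SeqElem → SeqElem

/-- A nested sequent. -/
abbrev Sequent := List SeqElem

/-- Unary contexts: a nested sequent with a single hole. -/
inductive Ctx : Type where
  | hole : Sequent → Ctx
  | nest : Sequent → Ctx → Ctx

/-- Fill the hole of a context with a sequent. -/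
def Ctx.fill : Ctx → Sequent → Sequent
  | .hole Δ, Γ => Δ ++ Γ
  | .nest Δ c, Γ => .nest (c.fill Γ) :: Δ

/-- Depth of a context: number of brackets surrounding the hole. -/
def Ctx.depth : Ctx → ℕ
  | .hole _ => 0
  | .nest _ c => c.depth + 1

/-- Equivalence of nested sequents up to (deep) exchange. -/
inductive SeqEquiv : Sequent → Sequent → Prop where
  | nil : SeqEquiv [] []
  | cons {e : SeqElem} {Γ Δ : Sequent} : SeqEquiv Γ Δ → SeqEquiv (e :: Γ) (e :: Δ)
  | consNest {Γ' Δ' Γ Δ : Sequent} :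
      SeqEquiv Γ' Δ' → SeqEquiv Γ Δ → SeqEquiv (.nest Γ' :: Γ) (.nest Δ' :: Δ)
  | swap (a b : SeqElem) (Γ : Sequent) : SeqEquiv (a :: b :: Γ) (b :: a :: Γ)
  | trans {Γ Δ Θ : Sequent} : SeqEquiv Γ Δ → SeqEquiv Δ Θ → SeqEquiv Γ Θ

/-- `DerivH n Γ`: `Γ` has a cut-free derivation of height at most `n`. -/
inductive DerivH : ℕ → Sequent → Prop where
  | id (n : ℕ) (c : Ctx) (a : ℕ) :
      DerivH n (c.fill [.fml (.pos a), .fml (.neg a)])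
  | and {n : ℕ} {c : Ctx} {A B : Formula} :
      DerivH n (c.fill [.fml A]) → DerivH n (c.fill [.fml B]) →
      DerivH (n + 1) (c.fill [.fml (.and A B)])
  | or {n : ℕ} {c : Ctx} {A B : Formula} :
      DerivH n (c.fill [.fml A, .fml B]) →
      DerivH (n + 1) (c.fill [.fml (.or A B)])
  | box {n : ℕ} {c : Ctx} {A : Formula} :
      DerivH n (c.fill [.nest [.fml (.dia A.negate), .fml A]]) →
      DerivH (n + 1) (c.fill [.fml (.box A)])
  | dia {n : ℕ} (c d : Ctx) {A : Formula} :
      0 < d.depth →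
      DerivH n (c.fill (d.fill [.fml A] ++ [.fml (.dia A)])) →
      DerivH (n + 1) (c.fill (d.fill [] ++ [.fml (.dia A)]))
  | exch {n : ℕ} {Γ Δ : Sequent} : SeqEquiv Γ Δ → DerivH n Γ → DerivH n Δ
  | up {n : ℕ} {Γ : Sequent} : DerivH n Γ → DerivH (n + 1) Γ

/-- Derivability where cut is permitted on formulas satisfying `P`. -/
inductive DerivWith (P : Formula → Prop) : Sequent → Prop where
  | id (c : Ctx) (a : ℕ) :
      DerivWith P (c.fill [.fml (.pos a), .fml (.neg a)])
  | and {c : Ctx} {A B : Formula} :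
      DerivWith P (c.fill [.fml A]) → DerivWith P (c.fill [.fml B]) →
      DerivWith P (c.fill [.fml (.and A B)])
  | or {c : Ctx} {A B : Formula} :
      DerivWith P (c.fill [.fml A, .fml B]) →
      DerivWith P (c.fill [.fml (.or A B)])
  | box {c : Ctx} {A : Formula} :
      DerivWith P (c.fill [.nest [.fml (.dia A.negate), .fml A]]) →
      DerivWith P (c.fill [.fml (.box A)])
  | dia (c d : Ctx) {A : Formula} :
      0 < d.depth →
      DerivWith P (c.fill (d.fill [.fml A] ++ [.fml (.dia A)])) →
      DerivWith P (c.fill (d.fill [] ++ [.fml (.dia A)]))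
  | cut {c : Ctx} {A : Formula} : P A →
      DerivWith P (c.fill [.fml A]) → DerivWith P (c.fill [.fml A.negate]) →
      DerivWith P (c.fill [])
  | exch {Γ Δ : Sequent} : SeqEquiv Γ Δ → DerivWith P Γ → DerivWith P Δ

/-- Cut-free derivability. -/
abbrev Deriv : Sequent → Prop := DerivWith (fun _ => False)
/-- Elements of an annotated nested sequent: ordinary formulas, diamond
formulas `◇A_Σ` annotated with a finite set of formulas, and brackets
`[Δ]_B` annotated with a formula. -/
inductive AElem : Type where
  | fml : Formula → AElem
  | dia : Formula → Finset Formula → AElem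
  | nest : Formula → List AElem → AElem

/-- Annotated nested sequents. -/
abbrev ASeq := List AElem

/-- Annotated unary contexts. -/
inductive ACtx : Type where
  | hole : ASeq → ACtx
  | nest : Formula → ASeq → ACtx → ACtx

def ACtx.fill : ACtx → ASeq → ASeq
  | .hole Δ, Γ => Δ ++ Γ
  | .nest B Δ c, Γ => .nest B (c.fill Γ) :: Δ

/-- Formula occurrence as an annotated element: a diamond formula carries the
annotation set `s`, any other formula is unannotated. -/
def emb (A : Formula) (s : Finset Formula) : AElem :=
  match A with
  | .dia C => .dia C s
  | _ => .fml A

mutual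
/-- All diamond annotation sets in the element are empty. -/
def AElem.diaEmpty : AElem → Prop
  | .fml _ => True
  | .dia _ s => s = ∅
  | .nest _ Δ => ASeq.diaEmpty Δ
/-- All diamond annotation sets in the sequent are empty. -/
def ASeq.diaEmpty : ASeq → Prop
  | [] => True
  | e :: Δ => e.diaEmpty ∧ ASeq.diaEmpty Δ
end

mutual
/-- The element contains no bracket annotated with `B`. -/
def AElem.noBr (B : Formula) : AElem → Prop
  | .fml _ => True
  | .dia _ _ => True
  | .nest C Δ => C ≠ B ∧ ASeq.noBr B Δ
/-- The sequent contains no bracket annotated with `B`. -/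
def ASeq.noBr (B : Formula) : ASeq → Prop
  | [] => True
  | e :: Δ => e.noBr B ∧ ASeq.noBr B Δ
end

mutual
/-- The operation `(−)⁺`: weaken every bracket `[Δ']_C` to `[Δ'⁺, ◇C⊥]_C`. -/
def AElem.plus : AElem → AElem
  | .fml A => .fml A
  | .dia A s => .dia A s
  | .nest C Δ => .nest C (AElem.dia C.negate ∅ :: ASeq.plus Δ)
def ASeq.plus : ASeq → ASeq
  | [] => []
  | e :: Δ => e.plus :: ASeq.plus Δ
end

mutual
/-- Erase all annotations. -/
def AElem.erase : AElem → SeqElem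
  | .fml A => .fml A
  | .dia A _ => .fml (.dia A)
  | .nest _ Δ => .nest (ASeq.erase Δ)
def ASeq.erase : ASeq → Sequent
  | [] => []
  | e :: Δ => e.erase :: ASeq.erase Δ
end

/-- Equivalence of annotated sequents up to (deep) exchange. -/
inductive AEquiv : ASeq → ASeq → Prop where
  | nil : AEquiv [] []
  | cons {e : AElem} {Γ Δ : ASeq} : AEquiv Γ Δ → AEquiv (e :: Γ) (e :: Δ)
  | consNest {B : Formula} {Γ' Δ' Γ Δ : ASeq} :
      AEquiv Γ' Δ' → AEquiv Γ Δ → AEquiv (.nest B Γ' :: Γ) (.nest B Δ' :: Δ)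
  | swap (a b : AElem) (Γ : ASeq) : AEquiv (a :: b :: Γ) (b :: a :: Γ)
  | trans {Γ Δ Θ : ASeq} : AEquiv Γ Δ → AEquiv Δ Θ → AEquiv Γ Θ

/-- Merging two annotated sequents with the same underlying skeleton and
identical bracket annotations: diamond annotation sets are unioned. -/
inductive AMerge : ASeq → ASeq → ASeq → Prop where
  | nil : AMerge [] [] []
  | fml {C : Formula} {Γ₁ Γ₂ Γ : ASeq} :
      AMerge Γ₁ Γ₂ Γ → AMerge (.fml C :: Γ₁) (.fml C :: Γ₂) (.fml C :: Γ)
  | dia {A : Formula} {s₁ s₂ : Finset Formula} {Γ₁ Γ₂ Γ : ASeq} :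
      AMerge Γ₁ Γ₂ Γ →
      AMerge (.dia A s₁ :: Γ₁) (.dia A s₂ :: Γ₂) (.dia A (s₁ ∪ s₂) :: Γ)
  | nest {B : Formula} {Δ₁ Δ₂ Δ Γ₁ Γ₂ Γ : ASeq} :
      AMerge Δ₁ Δ₂ Δ → AMerge Γ₁ Γ₂ Γ →
      AMerge (.nest B Δ₁ :: Γ₁) (.nest B Δ₂ :: Γ₂) (.nest B Δ :: Γ)

/-- Merging two annotated contexts. -/
inductive ACtxMerge : ACtx → ACtx → ACtx → Prop where
  | hole {Δ₁ Δ₂ Δ : ASeq} : AMerge Δ₁ Δ₂ Δ →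
      ACtxMerge (.hole Δ₁) (.hole Δ₂) (.hole Δ)
  | nest {B : Formula} {Δ₁ Δ₂ Δ : ASeq} {c₁ c₂ c : ACtx} :
      AMerge Δ₁ Δ₂ Δ → ACtxMerge c₁ c₂ c →
      ACtxMerge (.nest B Δ₁ c₁) (.nest B Δ₂ c₂) (.nest B Δ c)

/-- Annotated derivability, with cut permitted on formulas satisfying `P`. -/
inductive ADeriv (P : Formula → Prop) : ASeq → Prop where
  | id {c : ACtx} {a : ℕ} :
      ASeq.diaEmpty (c.fill [.fml (.pos a), .fml (.neg a)]) →
      ADeriv P (c.fill [.fml (.pos a), .fml (.neg a)])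
  | and {c₁ c₂ c : ACtx} {A B : Formula} {s₁ s₂ : Finset Formula} :
      ACtxMerge c₁ c₂ c →
      ADeriv P (c₁.fill [emb A s₁]) → ADeriv P (c₂.fill [emb B s₂]) →
      ADeriv P (c.fill [.fml (.and A B)])
  | or {c : ACtx} {A B : Formula} {s₁ s₂ : Finset Formula} :
      ADeriv P (c.fill [emb A s₁, emb B s₂]) →
      ADeriv P (c.fill [.fml (.or A B)])
  | box {c : ACtx} {A : Formula} {S : Finset Formula} {s : Finset Formula} :
      ADeriv P (c.fill [.nest A [.dia A.negate S, emb A s]]) →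
      ADeriv P (c.fill [.fml (.box A)])
  | dia {c d : ACtx} {A B : Formula} {S s : Finset Formula} {Δ' : ASeq} :
      ADeriv P (c.fill (d.fill [.nest B (emb A s :: Δ')] ++ [.dia A S])) →
      ADeriv P (c.fill (d.fill [.nest B Δ'] ++ [.dia A (insert B S)]))
  | cut {c₁ c₂ c : ACtx} {A : Formula} {s₁ s₂ : Finset Formula} :
      P A → ACtxMerge c₁ c₂ c →
      ADeriv P (c₁.fill [emb A s₁]) → ADeriv P (c₂.fill [emb A.negate s₂]) →
      ADeriv P (c.fill [])
  | exch {Γ Δ : ASeq} : AEquiv Γ Δ → ADeriv P Γ → ADeriv P Δ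

/-! ### Auxiliary development for the lifting theorem -/

/-- Same skeleton and bracket annotations; diamond annotation sets may differ. -/
inductive BrEq : ASeq → ASeq → Prop where
  | nil : BrEq [] []
  | fml {A : Formula} {Γ Γ' : ASeq} : BrEq Γ Γ' → BrEq (.fml A :: Γ) (.fml A :: Γ')
  | dia {A : Formula} {s t : Finset Formula} {Γ Γ' : ASeq} :
      BrEq Γ Γ' → BrEq (.dia A s :: Γ) (.dia A t :: Γ')
  | nest {B : Formula} {Θ Θ' Γ Γ' : ASeq} :
      BrEq Θ Θ' → BrEq Γ Γ' → BrEq (.nest B Θ :: Γ) (.nest B Θ' :: Γ')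

inductive BrCtx : ACtx → ACtx → Prop where
  | hole {Δ Δ' : ASeq} : BrEq Δ Δ' → BrCtx (.hole Δ) (.hole Δ')
  | nest {B : Formula} {Δ Δ' : ASeq} {c c' : ACtx} :
      BrEq Δ Δ' → BrCtx c c' → BrCtx (.nest B Δ c) (.nest B Δ' c')

theorem breq_cons {e e' : AElem} {Γ Γ' : ASeq} (h : BrEq [e] [e'])
    (h2 : BrEq Γ Γ') : BrEq (e :: Γ) (e' :: Γ') := by
  cases h with
  | fml _ => exact .fml h2
  | dia _ => exact .dia h2
  | nest h1 _ => exact .nest h1 h2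

theorem breq_refl : ∀ Γ : ASeq, BrEq Γ Γ
  | [] => .nil
  | .fml _ :: Γ => .fml (breq_refl Γ)
  | .dia _ _ :: Γ => .dia (breq_refl Γ)
  | .nest _ Θ :: Γ => .nest (breq_refl Θ) (breq_refl Γ)

theorem breq_symm : ∀ {Γ Δ : ASeq}, BrEq Γ Δ → BrEq Δ Γ := by
  intro Γ Δ h
  induction h with
  | nil => exact .nil
  | fml _ ih => exact .fml ih
  | dia _ ih => exact .dia ih
  | nest _ _ ih1 ih2 => exact .nest ih1 ih2

theorem breq_trans : ∀ {Γ Δ E : ASeq}, BrEq Γ Δ → BrEq Δ E → BrEq Γ E := by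
  intro Γ Δ E h1 h2
  induction h1 generalizing E with
  | nil => exact h2
  | fml _ ih => cases h2 with | fml h2' => exact .fml (ih h2')
  | dia _ ih => cases h2 with | dia h2' => exact .dia (ih h2')
  | nest _ _ ih1 ih2 => cases h2 with | nest h1' h2' => exact .nest (ih1 h1') (ih2 h2')

theorem breq_append : ∀ {Γ₁ Γ₂ Δ₁ Δ₂ : ASeq}, BrEq Γ₁ Δ₁ → BrEq Γ₂ Δ₂ →
    BrEq (Γ₁ ++ Γ₂) (Δ₁ ++ Δ₂) := by
  intro Γ₁ Γ₂ Δ₁ Δ₂ h1 h2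
  induction h1 with
  | nil => exact h2
  | fml _ ih => exact .fml ih
  | dia _ ih => exact .dia ih
  | nest h _ ih1 ih2 => exact .nest h ih2

theorem brctx_symm : ∀ {c c' : ACtx}, BrCtx c c' → BrCtx c' c := by
  intro c c' h
  induction h with
  | hole h => exact .hole (breq_symm h)
  | nest h _ ih => exact .nest (breq_symm h) ih

theorem brctx_trans : ∀ {c c' c'' : ACtx}, BrCtx c c' → BrCtx c' c'' → BrCtx c c'' := by
  intro c c' c'' h1 h2
  induction h1 generalizing c'' with
  | hole h => cases h2 with | hole h' => exact .hole (breq_trans h h')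
  | nest h _ ih => cases h2 with | nest h' h2' => exact .nest (breq_trans h h') (ih h2')

theorem brctx_fill : ∀ {c c' : ACtx} {X X' : ASeq}, BrCtx c c' → BrEq X X' →
    BrEq (c.fill X) (c'.fill X') := by
  intro c c' X X' h hX
  induction h with
  | hole h => exact breq_append h hX
  | nest h _ ih => exact .nest ih h

theorem breq_cons_inv {X : ASeq} {e : AElem} {Γ : ASeq} (h : BrEq X (e :: Γ)) :
    ∃ e' X', X = e' :: X' ∧ BrEq [e'] [e] ∧ BrEq X' Γ := by
  cases h with
  | fml h2 => exact ⟨_, _, rfl, .fml .nil, h2⟩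
  | dia h2 => exact ⟨_, _, rfl, .dia .nil, h2⟩
  | nest h1 h2 => exact ⟨_, _, rfl, .nest h1 .nil, h2⟩

theorem breq_nil_inv {X : ASeq} (h : BrEq X []) : X = [] := by cases h; rfl

theorem breq_split : ∀ (Y : ASeq) {X Δ : ASeq}, BrEq Δ (Y ++ X) →
    ∃ Δ₁ Δ₂ : ASeq, Δ = Δ₁ ++ Δ₂ ∧ BrEq Δ₁ Y ∧ BrEq Δ₂ X := by
  intro Y
  induction Y with
  | nil => exact fun h => ⟨[], _, rfl, .nil, h⟩
  | cons y Y ih =>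
    intro X Δ h
    obtain ⟨e', Δ', rfl, he, ht⟩ := breq_cons_inv h
    obtain ⟨Δ₁, Δ₂, rfl, h1, h2⟩ := ih ht
    exact ⟨e' :: Δ₁, Δ₂, rfl, breq_cons he h1, h2⟩

theorem breq_decomp : ∀ (ac : ACtx) {Δ X : ASeq}, BrEq Δ (ac.fill X) →
    ∃ (ac' : ACtx) (X' : ASeq), Δ = ac'.fill X' ∧ BrCtx ac' ac ∧ BrEq X' X := by
  intro ac
  induction ac with
  | hole Θ =>
    intro Δ X h
    obtain ⟨Δ₁, Δ₂, rfl, h1, h2⟩ := breq_split Θ h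
    exact ⟨.hole Δ₁, Δ₂, rfl, .hole h1, h2⟩
  | nest B Θ c ih =>
    intro Δ X h
    cases h with
    | nest hin htail =>
      obtain ⟨ac', X', rfl, hc, hX⟩ := ih hin
      exact ⟨.nest B _ ac', X', rfl, .nest htail hc, hX⟩

theorem breq_single_fml {e : AElem} {A : Formula} (h : BrEq [e] [.fml A]) :
    e = .fml A := by cases h; rfl

theorem breq_single_dia {e : AElem} {A : Formula} {t : Finset Formula}
    (h : BrEq [e] [.dia A t]) : ∃ s, e = .dia A s := by
  cases h with | dia _ => exact ⟨_, rfl⟩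

theorem breq_single_nest {e : AElem} {B : Formula} {Θ' : ASeq}
    (h : BrEq [e] [.nest B Θ']) : ∃ Θ, e = .nest B Θ ∧ BrEq Θ Θ' := by
  cases h with | nest h1 _ => exact ⟨_, rfl, h1⟩

theorem breq_single_emb {e : AElem} {A : Formula} {t : Finset Formula}
    (h : BrEq [e] [emb A t]) : ∃ s : Finset Formula, e = emb A s := by
  cases A
  case dia C =>
    obtain ⟨s, rfl⟩ := breq_single_dia (show BrEq [e] [.dia C t] from h)
    exact ⟨s, rfl⟩
  all_goals exact ⟨t, breq_single_fml h⟩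

theorem breq_erase : ∀ {Γ Δ : ASeq}, BrEq Γ Δ → ASeq.erase Γ = ASeq.erase Δ := by
  intro Γ Δ h
  induction h with
  | nil => rfl
  | fml _ ih => simp only [ASeq.erase, ih]
  | dia _ ih => simp only [ASeq.erase, AElem.erase, ih]
  | nest _ _ ih1 ih2 => simp only [ASeq.erase, AElem.erase, ih1, ih2]

/-! ### Merges -/

theorem amerge_exists : ∀ {Γ₁ Γ₂ : ASeq}, BrEq Γ₁ Γ₂ →
    ∃ Γ, AMerge Γ₁ Γ₂ Γ ∧ BrEq Γ Γ₁ := by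
  intro Γ₁ Γ₂ h
  induction h with
  | nil => exact ⟨[], .nil, .nil⟩
  | fml _ ih => obtain ⟨Γ, hm, hb⟩ := ih; exact ⟨_, .fml hm, .fml hb⟩
  | dia _ ih => obtain ⟨Γ, hm, hb⟩ := ih; exact ⟨_, .dia hm, .dia hb⟩
  | nest _ _ ih1 ih2 =>
    obtain ⟨Θ, hm1, hb1⟩ := ih1
    obtain ⟨Γ, hm2, hb2⟩ := ih2
    exact ⟨_, .nest hm1 hm2, .nest hb1 hb2⟩

theorem actxmerge_exists : ∀ {c₁ c₂ : ACtx}, BrCtx c₁ c₂ →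
    ∃ c, ACtxMerge c₁ c₂ c ∧ BrCtx c c₁ := by
  intro c₁ c₂ h
  induction h with
  | hole h => obtain ⟨Γ, hm, hb⟩ := amerge_exists h; exact ⟨_, .hole hm, .hole hb⟩
  | nest h _ ih =>
    obtain ⟨Γ, hm, hb⟩ := amerge_exists h
    obtain ⟨c, hcm, hcb⟩ := ih
    exact ⟨_, .nest hm hcm, .nest hb hcb⟩

/-! ### AEquiv machinery -/

theorem aeq_refl : ∀ Γ : ASeq, AEquiv Γ Γ
  | [] => .nil
  | _ :: Γ => .cons (aeq_refl Γ)

theorem aeq_symm : ∀ {Γ Δ : ASeq}, AEquiv Γ Δ → AEquiv Δ Γ := by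
  intro Γ Δ h
  induction h with
  | nil => exact .nil
  | cons _ ih => exact .cons ih
  | consNest _ _ ih1 ih2 => exact .consNest ih1 ih2
  | swap a b Γ => exact .swap b a Γ
  | trans _ _ ih1 ih2 => exact .trans ih2 ih1

theorem aeq_append_right : ∀ {Γ Δ : ASeq}, AEquiv Γ Δ → ∀ (Θ : ASeq),
    AEquiv (Γ ++ Θ) (Δ ++ Θ) := by
  intro Γ Δ h
  induction h with
  | nil => exact fun Θ => aeq_refl Θ
  | cons _ ih => exact fun Θ => .cons (ih Θ)
  | consNest h1 _ ih1 ih2 => exact fun Θ => .consNest h1 (ih2 Θ)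
  | swap a b Γ => exact fun Θ => .swap a b (Γ ++ Θ)
  | trans _ _ ih1 ih2 => exact fun Θ => .trans (ih1 Θ) (ih2 Θ)

theorem aeq_append_left : ∀ (Θ : ASeq) {Γ Δ : ASeq}, AEquiv Γ Δ →
    AEquiv (Θ ++ Γ) (Θ ++ Δ)
  | [], _, _, h => h
  | _ :: Θ, _, _, h => .cons (aeq_append_left Θ h)

theorem aeq_fill : ∀ (ac : ACtx) {X X' : ASeq}, AEquiv X X' →
    AEquiv (ac.fill X) (ac.fill X')
  | .hole Δ, _, _, h => aeq_append_left Δ h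
  | .nest B Δ c, _, _, h => .consNest (aeq_fill c h) (aeq_refl Δ)

theorem aeq_rotate : ∀ (Θ : ASeq) (x : AElem), AEquiv (Θ ++ [x]) (x :: Θ)
  | [], x => aeq_refl [x]
  | e :: Θ, x => .trans (.cons (aeq_rotate Θ x)) (.swap e x Θ)

/-- Extract the innermost bracket of a non-trivial annotated context. -/
theorem actx_split : ∀ (c : ACtx) (B₀ : Formula) (Θ₀ : ASeq),
    ∃ (e : ACtx) (B : Formula) (Φ : ASeq), ∀ X : ASeq,
      AEquiv ((ACtx.nest B₀ Θ₀ c).fill X) (e.fill [.nest B (Φ ++ X)]) := by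
  intro c
  induction c with
  | hole Φ =>
    intro B₀ Θ₀
    exact ⟨.hole Θ₀, B₀, Φ, fun X => aeq_symm (aeq_rotate Θ₀ (.nest B₀ (Φ ++ X)))⟩
  | nest B₁ Θ₁ c ih =>
    intro B₀ Θ₀
    obtain ⟨e, B, Φ, h⟩ := ih B₁ Θ₁
    exact ⟨.nest B₀ Θ₀ e, B, Φ, fun X => .consNest (h X) (aeq_refl Θ₀)⟩

/-- Transport an exchange along `BrEq`. -/
theorem aeq_transport : ∀ {Γ₀ Δ₀ : ASeq}, AEquiv Γ₀ Δ₀ → ∀ {Γ : ASeq}, BrEq Γ Γ₀ →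
    ∃ Δ, AEquiv Γ Δ ∧ BrEq Δ Δ₀ := by
  intro Γ₀ Δ₀ h
  induction h with
  | nil => intro Γ hb; cases hb; exact ⟨[], .nil, .nil⟩
  | cons _ ih =>
    intro Γ hb
    obtain ⟨e', Γ', rfl, he, ht⟩ := breq_cons_inv hb
    obtain ⟨Δ, hA, hB⟩ := ih ht
    exact ⟨e' :: Δ, .cons hA, breq_cons he hB⟩
  | consNest _ _ ih1 ih2 =>
    intro Γc hb
    cases hb with
    | nest h1 h2 =>
      obtain ⟨Θ', hA1, hB1⟩ := ih1 h1
      obtain ⟨T', hA2, hB2⟩ := ih2 h2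
      exact ⟨.nest _ Θ' :: T', .consNest hA1 hA2, .nest hB1 hB2⟩
  | swap a b Γ =>
    intro Γc hb
    obtain ⟨a', Γ₁, rfl, ha, ht⟩ := breq_cons_inv hb
    obtain ⟨b', Γ₂, rfl, hbb, ht2⟩ := breq_cons_inv ht
    exact ⟨b' :: a' :: Γ₂, .swap a' b' Γ₂, breq_cons hbb (breq_cons ha ht2)⟩
  | trans _ _ ih1 ih2 =>
    intro Γc hb
    obtain ⟨Δm, hA1, hB1⟩ := ih1 hb
    obtain ⟨Δ, hA2, hB2⟩ := ih2 hB1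
    exact ⟨Δ, .trans hA1 hA2, hB2⟩
/-! ### Erasure lemmas -/

def ACtx.eraseC : ACtx → Ctx
  | .hole Δ => .hole (ASeq.erase Δ)
  | .nest _ Δ c => .nest (ASeq.erase Δ) c.eraseC

theorem erase_append : ∀ (Γ Δ : ASeq),
    ASeq.erase (Γ ++ Δ) = ASeq.erase Γ ++ ASeq.erase Δ
  | [], Δ => rfl
  | e :: Γ, Δ => by
    simp only [List.cons_append, List.append_eq, ASeq.erase, erase_append Γ Δ]

theorem erase_fill : ∀ (ac : ACtx) (X : ASeq),
    ASeq.erase (ac.fill X) = (ACtx.eraseC ac).fill (ASeq.erase X)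
  | .hole Δ, X => by
    simp only [ACtx.fill, ACtx.eraseC, Ctx.fill, erase_append]
  | .nest B Δ c, X => by
    simp only [ACtx.fill, ACtx.eraseC, Ctx.fill, ASeq.erase, AElem.erase,
      erase_fill c X]

theorem erase_emb (A : Formula) (s : Finset Formula) :
    AElem.erase (emb A s) = .fml A := by
  cases A <;> simp [emb, AElem.erase]

theorem erase_nil_inv {Δ : ASeq} (h : ASeq.erase Δ = []) : Δ = [] := by
  cases Δ with
  | nil => rfl
  | cons e Δ => simp [ASeq.erase] at h

theorem erase_cons_inv {Δ : ASeq} {e : SeqElem} {L : Sequent}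
    (h : ASeq.erase Δ = e :: L) :
    ∃ e' Δ', Δ = e' :: Δ' ∧ AElem.erase e' = e ∧ ASeq.erase Δ' = L := by
  cases Δ with
  | nil => simp [ASeq.erase] at h
  | cons e' Δ' =>
    simp only [ASeq.erase, List.cons.injEq] at h
    exact ⟨e', Δ', rfl, h.1, h.2⟩

theorem erase_split : ∀ (Y : Sequent) {X : Sequent} {Δ : ASeq},
    ASeq.erase Δ = Y ++ X →
    ∃ Δ₁ Δ₂ : ASeq, Δ = Δ₁ ++ Δ₂ ∧ ASeq.erase Δ₁ = Y ∧ ASeq.erase Δ₂ = X := by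
  intro Y
  induction Y with
  | nil => exact fun h => ⟨[], _, rfl, rfl, h⟩
  | cons y Y ih =>
    intro X Δ h
    obtain ⟨e', Δ', rfl, he, ht⟩ := erase_cons_inv h
    obtain ⟨Δ₁, Δ₂, rfl, h1, h2⟩ := ih ht
    exact ⟨e' :: Δ₁, Δ₂, rfl, by simp [ASeq.erase, he, h1], h2⟩

theorem erase_decomp : ∀ (c : Ctx) {Δ : ASeq} {X : Sequent},
    ASeq.erase Δ = c.fill X →
    ∃ (ac : ACtx) (X' : ASeq), Δ = ac.fill X' ∧ ACtx.eraseC ac = c ∧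
      ASeq.erase X' = X := by
  intro c
  induction c with
  | hole Θ =>
    intro Δ X h
    simp only [Ctx.fill] at h
    obtain ⟨Δ₁, Δ₂, rfl, h1, h2⟩ := erase_split Θ h
    exact ⟨.hole Δ₁, Δ₂, rfl, by simp [ACtx.eraseC, h1], h2⟩
  | nest Θ c ih =>
    intro Δ X h
    simp only [Ctx.fill] at h
    obtain ⟨e, Δ', rfl, he, ht⟩ := erase_cons_inv h
    cases e with
    | fml _ => simp [AElem.erase] at he
    | dia _ _ => simp [AElem.erase] at he
    | nest B Θe =>
      simp only [AElem.erase, SeqElem.nest.injEq] at he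
      obtain ⟨ac', X', rfl, hce, hX⟩ := ih he
      exact ⟨.nest B Δ' ac', X', rfl, by simp [ACtx.eraseC, hce, ht], hX⟩

theorem erase_fml_of_ne_dia {e : AElem} {F : Formula}
    (hF : ∀ C, F ≠ .dia C) (h : AElem.erase e = .fml F) : e = .fml F := by
  cases e with
  | fml A => simp only [AElem.erase, SeqElem.fml.injEq] at h; rw [h]
  | dia A s =>
    simp only [AElem.erase, SeqElem.fml.injEq] at h
    exact absurd h.symm (hF A)
  | nest _ _ => simp [AElem.erase] at h

/-! ### Dia-normality -/

mutual
def AElem.dn : AElem → Prop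
  | .fml A => ∀ C, A ≠ Formula.dia C
  | .dia _ _ => True
  | .nest _ Δ => ASeq.dn Δ
def ASeq.dn : ASeq → Prop
  | [] => True
  | e :: Δ => e.dn ∧ ASeq.dn Δ
end

def ACtx.dn : ACtx → Prop
  | .hole Δ => ASeq.dn Δ
  | .nest _ Δ c => ASeq.dn Δ ∧ c.dn

theorem emb_dn (A : Formula) (s : Finset Formula) : AElem.dn (emb A s) := by
  cases A <;> simp [emb, AElem.dn]

theorem dn_append : ∀ (Γ Δ : ASeq), ASeq.dn (Γ ++ Δ) ↔ ASeq.dn Γ ∧ ASeq.dn Δ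
  | [], Δ => by simp [ASeq.dn]
  | e :: Γ, Δ => by
    simp only [List.cons_append, List.append_eq, ASeq.dn, dn_append Γ Δ, and_assoc]

theorem dn_fill : ∀ (ac : ACtx) (X : ASeq),
    ASeq.dn (ac.fill X) ↔ ACtx.dn ac ∧ ASeq.dn X
  | .hole Δ, X => by simp only [ACtx.fill, ACtx.dn, dn_append]
  | .nest B Δ c, X => by
    simp only [ACtx.fill, ACtx.dn, ASeq.dn, AElem.dn, dn_fill c X]
    tauto

theorem erase_dn_dia {e : AElem} {A : Formula}
    (h : AElem.erase e = .fml (.dia A)) (hdn : AElem.dn e) :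
    ∃ T, e = .dia A T := by
  cases e with
  | fml B =>
    simp only [AElem.erase, SeqElem.fml.injEq] at h
    simp only [AElem.dn] at hdn
    exact absurd h (hdn A)
  | dia B T =>
    simp only [AElem.erase, SeqElem.fml.injEq, Formula.dia.injEq] at h
    exact ⟨T, by rw [h]⟩
  | nest _ _ => simp [AElem.erase] at h

/-! ### Zeroing annotations -/

mutual
def AElem.zero : AElem → AElem
  | .fml A => .fml A
  | .dia A _ => .dia A ∅
  | .nest B Δ => .nest B (ASeq.zero Δ)
def ASeq.zero : ASeq → ASeq
  | [] => []
  | e :: Δ => e.zero :: ASeq.zero Δ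
end

def ACtx.zero : ACtx → ACtx
  | .hole Δ => .hole (ASeq.zero Δ)
  | .nest B Δ c => .nest B (ASeq.zero Δ) c.zero

mutual
theorem AElem.zero_breq : ∀ e : AElem, BrEq [AElem.zero e] [e]
  | .fml A => by simp only [AElem.zero]; exact .fml .nil
  | .dia A s => by simp only [AElem.zero]; exact .dia .nil
  | .nest B Δ => by simp only [AElem.zero]; exact .nest (ASeq.zero_breq Δ) .nil
theorem ASeq.zero_breq : ∀ Γ : ASeq, BrEq (ASeq.zero Γ) Γ
  | [] => by simp only [ASeq.zero]; exact .nil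
  | e :: Γ => by
    simp only [ASeq.zero]
    exact breq_cons (AElem.zero_breq e) (ASeq.zero_breq Γ)
end

theorem zero_brctx : ∀ ac : ACtx, BrCtx (ACtx.zero ac) ac
  | .hole Δ => .hole (ASeq.zero_breq Δ)
  | .nest B Δ c => .nest (ASeq.zero_breq Δ) (zero_brctx c)

mutual
theorem AElem.zero_diaEmpty : ∀ e : AElem, AElem.diaEmpty (AElem.zero e)
  | .fml A => by simp only [AElem.zero, AElem.diaEmpty]
  | .dia A s => by simp only [AElem.zero, AElem.diaEmpty]
  | .nest B Δ => by
    simp only [AElem.zero, AElem.diaEmpty]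
    exact ASeq.zero_diaEmpty Δ
theorem ASeq.zero_diaEmpty : ∀ Γ : ASeq, ASeq.diaEmpty (ASeq.zero Γ)
  | [] => by simp only [ASeq.zero, ASeq.diaEmpty]
  | e :: Γ => by
    simp only [ASeq.zero, ASeq.diaEmpty]
    exact ⟨AElem.zero_diaEmpty e, ASeq.zero_diaEmpty Γ⟩
end

theorem diaEmpty_append : ∀ {Γ Δ : ASeq}, ASeq.diaEmpty Γ → ASeq.diaEmpty Δ →
    ASeq.diaEmpty (Γ ++ Δ) := by
  intro Γ
  induction Γ with
  | nil => exact fun _ h => h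
  | cons e Γ ih =>
    intro Δ h1 h2
    simp only [ASeq.diaEmpty] at h1
    exact ⟨h1.1, ih h1.2 h2⟩

theorem zero_fill_diaEmpty : ∀ (ac : ACtx) {X : ASeq}, ASeq.diaEmpty X →
    ASeq.diaEmpty ((ACtx.zero ac).fill X)
  | .hole Δ, X, h => by
    simp only [ACtx.zero, ACtx.fill]
    exact diaEmpty_append (ASeq.zero_diaEmpty Δ) h
  | .nest B Δ c, X, h => by
    simp only [ACtx.zero, ACtx.fill, ASeq.diaEmpty, AElem.diaEmpty]
    exact ⟨zero_fill_diaEmpty c h, ASeq.zero_diaEmpty Δ⟩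

/-! ### Canonical annotation -/

mutual
def annE : SeqElem → AElem
  | .fml A => emb A ∅
  | .nest Δ => .nest (.pos 0) (annS Δ)
def annS : Sequent → ASeq
  | [] => []
  | e :: Γ => annE e :: annS Γ
end

mutual
theorem annE_erase : ∀ e : SeqElem, AElem.erase (annE e) = e
  | .fml A => by simp only [annE]; exact erase_emb A ∅
  | .nest Δ => by
    simp only [annE, AElem.erase, SeqElem.nest.injEq]
    exact annS_erase Δ
theorem annS_erase : ∀ Γ : Sequent, ASeq.erase (annS Γ) = Γ
  | [] => by simp only [annS, ASeq.erase]
  | e :: Γ => by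
    simp only [annS, ASeq.erase, List.cons.injEq]
    exact ⟨annE_erase e, annS_erase Γ⟩
end

mutual
theorem annE_dn : ∀ e : SeqElem, AElem.dn (annE e)
  | .fml A => by simp only [annE]; exact emb_dn A ∅
  | .nest Δ => by simp only [annE, AElem.dn]; exact annS_dn Δ
theorem annS_dn : ∀ Γ : Sequent, ASeq.dn (annS Γ)
  | [] => by simp only [annS, ASeq.dn]
  | e :: Γ => by
    simp only [annS, ASeq.dn]
    exact ⟨annE_dn e, annS_dn Γ⟩
end
/-- Lift a plain exchange backwards along erasure, preserving dia-normality. -/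
theorem equiv_lift : ∀ {Γ Γ' : Sequent}, SeqEquiv Γ Γ' → ∀ {Δ' : ASeq},
    ASeq.erase Δ' = Γ' → ASeq.dn Δ' →
    ∃ Δ : ASeq, ASeq.erase Δ = Γ ∧ ASeq.dn Δ ∧ AEquiv Δ Δ' := by
  intro Γ Γ' h
  induction h with
  | nil =>
    intro Δ' hE _
    obtain rfl := erase_nil_inv hE
    exact ⟨[], rfl, trivial, .nil⟩
  | cons h ih =>
    intro Δ' hE hdn
    obtain ⟨e', Δ'', rfl, he, ht⟩ := erase_cons_inv hE
    obtain ⟨hdn1, hdn2⟩ := hdn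
    obtain ⟨Δ, h1, h2, h3⟩ := ih ht hdn2
    exact ⟨e' :: Δ, by simp [ASeq.erase, he, h1], ⟨hdn1, h2⟩, .cons h3⟩
  | consNest hin hout ih_in ih_out =>
    intro Δc hE hdn
    obtain ⟨e', Δ'', rfl, he, ht⟩ := erase_cons_inv hE
    obtain ⟨hdn1, hdn2⟩ := hdn
    cases e' with
    | fml _ => simp [AElem.erase] at he
    | dia _ _ => simp [AElem.erase] at he
    | nest B Θ' =>
      simp only [AElem.erase, SeqElem.nest.injEq] at he
      simp only [AElem.dn] at hdn1
      obtain ⟨Θ, g1, g2, g3⟩ := ih_in he hdn1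
      obtain ⟨Δ, k1, k2, k3⟩ := ih_out ht hdn2
      exact ⟨.nest B Θ :: Δ, by simp [ASeq.erase, AElem.erase, g1, k1],
        ⟨g2, k2⟩, .consNest g3 k3⟩
  | swap a b Γ =>
    intro Δ' hE hdn
    obtain ⟨eb, Δ₁, rfl, hb, ht⟩ := erase_cons_inv hE
    obtain ⟨ea, Δ₂, rfl, ha, ht2⟩ := erase_cons_inv ht
    obtain ⟨d1, d2, d3⟩ := hdn
    exact ⟨ea :: eb :: Δ₂, by simp [ASeq.erase, ha, hb, ht2], ⟨d2, d1, d3⟩,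
      .swap ea eb Δ₂⟩
  | trans h1 h2 ih1 ih2 =>
    intro Δ' hE hdn
    obtain ⟨Δm, g1, g2, g3⟩ := ih2 hE hdn
    obtain ⟨Δ, k1, k2, k3⟩ := ih1 g1 g2
    exact ⟨Δ, k1, k2, .trans k3 g3⟩
/-- Main lemma: lift a cut-free derivation to an annotated derivation matching
any prescribed dia-normal annotation skeleton of the endsequent. -/
theorem lift_aux : ∀ {Γ : Sequent}, DerivWith (fun _ => False) Γ →
    ∀ Δ₀ : ASeq, ASeq.erase Δ₀ = Γ → ASeq.dn Δ₀ →
    ∃ Δ : ASeq, BrEq Δ Δ₀ ∧ ADeriv (fun _ => False) Δ := by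
  intro Γ h
  induction h with
  | id c a =>
    intro Δ₀ hE hdn
    obtain ⟨ac, X', rfl, hce, hX⟩ := erase_decomp c hE
    obtain ⟨e₁, X₁, rfl, he₁, hX₁⟩ := erase_cons_inv hX
    obtain ⟨e₂, X₂, rfl, he₂, hX₂⟩ := erase_cons_inv hX₁
    obtain rfl := erase_nil_inv hX₂
    obtain rfl : e₁ = .fml (.pos a) := erase_fml_of_ne_dia (by intro C h; cases h) he₁
    obtain rfl : e₂ = .fml (.neg a) := erase_fml_of_ne_dia (by intro C h; cases h) he₂
    refine ⟨(ACtx.zero ac).fill [.fml (.pos a), .fml (.neg a)],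
      brctx_fill (zero_brctx ac) (.fml (.fml .nil)), ?_⟩
    exact ADeriv.id (zero_fill_diaEmpty ac
      (by simp only [ASeq.diaEmpty, AElem.diaEmpty]; trivial))
  | and hp1 hp2 ih1 ih2 =>
    rename_i c A B
    intro Δ₀ hE hdn
    obtain ⟨ac, X', rfl, hce, hX⟩ := erase_decomp c hE
    obtain ⟨e, X₁, rfl, he, hX₁⟩ := erase_cons_inv hX
    obtain rfl := erase_nil_inv hX₁
    obtain rfl : e = .fml (.and A B) := erase_fml_of_ne_dia (by intro C h; cases h) he
    have hdnc := ((dn_fill ac _).mp hdn).1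
    have hP1e : ASeq.erase (ac.fill [emb A ∅]) = c.fill [.fml A] := by
      rw [erase_fill, hce]
      simp [ASeq.erase, erase_emb]
    have hP1dn : ASeq.dn (ac.fill [emb A ∅]) :=
      (dn_fill _ _).mpr ⟨hdnc, emb_dn _ _, trivial⟩
    have hP2e : ASeq.erase (ac.fill [emb B ∅]) = c.fill [.fml B] := by
      rw [erase_fill, hce]
      simp [ASeq.erase, erase_emb]
    have hP2dn : ASeq.dn (ac.fill [emb B ∅]) :=
      (dn_fill _ _).mpr ⟨hdnc, emb_dn _ _, trivial⟩
    obtain ⟨Δ₁, hbr₁, hd1⟩ := ih1 _ hP1e hP1dn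
    obtain ⟨Δ₂, hbr₂, hd2⟩ := ih2 _ hP2e hP2dn
    obtain ⟨ac₁, Y₁, rfl, hcc₁, hY₁⟩ := breq_decomp ac hbr₁
    obtain ⟨ac₂, Y₂, rfl, hcc₂, hY₂⟩ := breq_decomp ac hbr₂
    obtain ⟨f₁, Y₁', rfl, hf₁, hY₁'⟩ := breq_cons_inv hY₁
    obtain rfl := breq_nil_inv hY₁'
    obtain ⟨s₁, rfl⟩ := breq_single_emb hf₁
    obtain ⟨f₂, Y₂', rfl, hf₂, hY₂'⟩ := breq_cons_inv hY₂
    obtain rfl := breq_nil_inv hY₂'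
    obtain ⟨s₂, rfl⟩ := breq_single_emb hf₂
    obtain ⟨acm, hm, hbm⟩ := actxmerge_exists (brctx_trans hcc₁ (brctx_symm hcc₂))
    exact ⟨acm.fill [.fml (.and A B)],
      brctx_fill (brctx_trans hbm hcc₁) (.fml .nil), .and hm hd1 hd2⟩
  | or hp ih =>
    rename_i c A B
    intro Δ₀ hE hdn
    obtain ⟨ac, X', rfl, hce, hX⟩ := erase_decomp c hE
    obtain ⟨e, X₁, rfl, he, hX₁⟩ := erase_cons_inv hX
    obtain rfl := erase_nil_inv hX₁
    obtain rfl : e = .fml (.or A B) := erase_fml_of_ne_dia (by intro C h; cases h) he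
    have hdnc := ((dn_fill ac _).mp hdn).1
    have hPe : ASeq.erase (ac.fill [emb A ∅, emb B ∅]) = c.fill [.fml A, .fml B] := by
      rw [erase_fill, hce]
      simp [ASeq.erase, erase_emb]
    have hPdn : ASeq.dn (ac.fill [emb A ∅, emb B ∅]) :=
      (dn_fill _ _).mpr ⟨hdnc, emb_dn _ _, emb_dn _ _, trivial⟩
    obtain ⟨Δ₁, hbr₁, hd1⟩ := ih _ hPe hPdn
    obtain ⟨ac₁, Y₁, rfl, hcc₁, hY₁⟩ := breq_decomp ac hbr₁
    obtain ⟨f₁, Y₁', rfl, hf₁, hY₁'⟩ := breq_cons_inv hY₁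
    obtain ⟨f₂, Y₂', rfl, hf₂, hY₂'⟩ := breq_cons_inv hY₁'
    obtain rfl := breq_nil_inv hY₂'
    obtain ⟨s₁, rfl⟩ := breq_single_emb hf₁
    obtain ⟨s₂, rfl⟩ := breq_single_emb hf₂
    exact ⟨ac₁.fill [.fml (.or A B)], brctx_fill hcc₁ (.fml .nil), .or hd1⟩
  | box hp ih =>
    rename_i c A
    intro Δ₀ hE hdn
    obtain ⟨ac, X', rfl, hce, hX⟩ := erase_decomp c hE
    obtain ⟨e, X₁, rfl, he, hX₁⟩ := erase_cons_inv hX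
    obtain rfl := erase_nil_inv hX₁
    obtain rfl : e = .fml (.box A) := erase_fml_of_ne_dia (by intro C h; cases h) he
    have hdnc := ((dn_fill ac _).mp hdn).1
    have hPe : ASeq.erase (ac.fill [.nest A [.dia A.negate ∅, emb A ∅]]) =
        c.fill [.nest [.fml (.dia A.negate), .fml A]] := by
      rw [erase_fill, hce]
      simp [ASeq.erase, AElem.erase, erase_emb]
    have hPdn : ASeq.dn (ac.fill [.nest A [.dia A.negate ∅, emb A ∅]]) := by
      refine (dn_fill _ _).mpr ⟨hdnc, ?_, trivial⟩
      simp only [AElem.dn, ASeq.dn]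
      exact ⟨trivial, emb_dn _ _, trivial⟩
    obtain ⟨Δ₁, hbr₁, hd1⟩ := ih _ hPe hPdn
    obtain ⟨ac₁, Y₁, rfl, hcc₁, hY₁⟩ := breq_decomp ac hbr₁
    obtain ⟨f, Y₁', rfl, hf, hY₁'⟩ := breq_cons_inv hY₁
    obtain rfl := breq_nil_inv hY₁'
    obtain ⟨Θ, rfl, hΘ⟩ := breq_single_nest hf
    obtain ⟨g₁, Θ', rfl, hg₁, hΘ'⟩ := breq_cons_inv hΘ
    obtain ⟨S, rfl⟩ := breq_single_dia hg₁
    obtain ⟨g₂, Θ'', rfl, hg₂, hΘ''⟩ := breq_cons_inv hΘ'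
    obtain rfl := breq_nil_inv hΘ''
    obtain ⟨s, rfl⟩ := breq_single_emb hg₂
    exact ⟨ac₁.fill [.fml (.box A)], brctx_fill hcc₁ (.fml .nil), .box hd1⟩
  | dia c d hdep hp ih =>
    rename_i A
    intro Δ₀ hE hdn
    obtain ⟨ac, X', rfl, hce, hX⟩ := erase_decomp c hE
    obtain ⟨Y₀, Z₀, rfl, hY, hZ⟩ := erase_split (d.fill []) hX
    obtain ⟨z, Z₀', rfl, hz, hz'⟩ := erase_cons_inv hZ
    obtain rfl := erase_nil_inv hz'
    have hdn' := (dn_fill ac _).mp hdn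
    have hdnY := ((dn_append _ _).mp hdn'.2).1
    have hdnZ := ((dn_append _ _).mp hdn'.2).2
    obtain ⟨T, rfl⟩ := erase_dn_dia hz hdnZ.1
    obtain ⟨ad, W, rfl, hde, hW⟩ := erase_decomp d hY
    obtain rfl := erase_nil_inv hW
    have hdnad : ACtx.dn ad := ((dn_fill ad _).mp hdnY).1
    -- lift the premise
    have hPe : ASeq.erase (ac.fill (ad.fill [emb A ∅] ++ [.dia A ∅])) =
        c.fill (d.fill [.fml A] ++ [.fml (.dia A)]) := by
      rw [erase_fill, erase_append, erase_fill, hce, hde]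
      simp [ASeq.erase, AElem.erase, erase_emb]
    have hPdn : ASeq.dn (ac.fill (ad.fill [emb A ∅] ++ [.dia A ∅])) := by
      refine (dn_fill _ _).mpr ⟨hdn'.1, (dn_append _ _).mpr ⟨?_, trivial, trivial⟩⟩
      exact (dn_fill _ _).mpr ⟨hdnad, emb_dn _ _, trivial⟩
    obtain ⟨Δ₁, hbr₁, hd1⟩ := ih _ hPe hPdn
    obtain ⟨ac₁, X₁, rfl, hcc₁, hX₁⟩ := breq_decomp ac hbr₁
    obtain ⟨Y₁, Z₁, rfl, hY₁, hZ₁⟩ := breq_split _ hX₁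
    obtain ⟨ad₁, W₁, rfl, hdd₁, hW₁⟩ := breq_decomp ad hY₁
    obtain ⟨f, W₁', rfl, hfe, hW₁'⟩ := breq_cons_inv hW₁
    obtain rfl := breq_nil_inv hW₁'
    obtain ⟨s, rfl⟩ := breq_single_emb hfe
    obtain ⟨z₁, Z₁', rfl, hz₁, hZ₁'⟩ := breq_cons_inv hZ₁
    obtain rfl := breq_nil_inv hZ₁'
    obtain ⟨S, rfl⟩ := breq_single_dia hz₁
    -- ad₁ is a nontrivial context
    obtain ⟨B₀, Θ₀, c₀, rfl⟩ : ∃ B₀ Θ₀ c₀, ad₁ = ACtx.nest B₀ Θ₀ c₀ := by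
      cases d with
      | hole _ => simp [Ctx.depth] at hdep
      | nest Θ dc =>
        cases ad with
        | hole _ => simp [ACtx.eraseC] at hde
        | nest B Δa adc => cases hdd₁ with | nest _ _ => exact ⟨_, _, _, rfl⟩
    obtain ⟨ae, B, Φ, hsplit⟩ := actx_split c₀ B₀ Θ₀
    have hstep1 : AEquiv (ac₁.fill ((ACtx.nest B₀ Θ₀ c₀).fill [emb A s] ++ [.dia A S]))
        (ac₁.fill (ae.fill [.nest B (emb A s :: Φ)] ++ [.dia A S])) := by
      refine aeq_fill ac₁ (aeq_append_right (.trans (hsplit [emb A s]) ?_) _)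
      exact aeq_fill ae (.consNest (aeq_rotate Φ (emb A s)) .nil)
    have hder₂ : ADeriv (fun _ => False)
        (ac₁.fill (ae.fill [.nest B (emb A s :: Φ)] ++ [.dia A S])) :=
      .exch hstep1 hd1
    have hder₃ := ADeriv.dia (c := ac₁) (d := ae) hder₂
    have hstep2 : AEquiv (ac₁.fill (ae.fill [.nest B Φ] ++ [.dia A (insert B S)]))
        (ac₁.fill ((ACtx.nest B₀ Θ₀ c₀).fill [] ++ [.dia A (insert B S)])) := by
      refine aeq_fill ac₁ (aeq_append_right (aeq_symm ?_) _)
      have := hsplit []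
      simpa using this
    refine ⟨_, ?_, .exch hstep2 hder₃⟩
    exact brctx_fill hcc₁ (breq_append (brctx_fill hdd₁ .nil) (.dia .nil))
  | cut hP _ _ _ _ => exact hP.elim
  | exch hSE hder ih =>
    intro Δ₀' hE hdn
    obtain ⟨Δ₀, hE0, hdn0, hAE⟩ := equiv_lift hSE hE hdn
    obtain ⟨Δ, hbr, hder'⟩ := ih Δ₀ hE0 hdn0
    obtain ⟨Δ', hA, hB⟩ := aeq_transport hAE hbr
    exact ⟨Δ', hB, .exch hA hder'⟩
/-- every cut-free derivation lifts to an annotated (cut-free)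
derivation whose annotation-erasure is the original sequent. -/
theorem lift_to_annotated (Γ : Sequent) (h : Deriv Γ) :
    ∃ Δ : ASeq, ASeq.erase Δ = Γ ∧ ADeriv (fun _ => False) Δ := by
  obtain ⟨Δ, hbr, hder⟩ := lift_aux h (annS Γ) (annS_erase Γ) (annS_dn Γ)
  exact ⟨Δ, by rw [breq_erase hbr, annS_erase], hder⟩
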